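/- There exists a constant C ≥ 0, independent of N, such that for every positive integer N with 1 − Γ/N ≥ 0 and (1 − Γ/N)(1 − Γ) ≥ 0, the coefficient matrices of the N-player and limiting leader Hamiltonian systems satisfy sup_{t∈[0,T]} ( ‖𝒜̌₁(t) − 𝒜₁(t)‖ + ‖ℬ̌₁(t) − ℬ₁(t)‖ + ‖ℬ̌₂(t) − ℬ₂(t)‖ + ‖𝔣̌₀(t) − 𝔣₀(t)‖ ) ≤ C/N, where ‖·‖ denotes the Frobenius norm (Euclidean norm for vectors). -/

import Mathlib

attribute [local instance] Matrix.frobeniusNormedAddCommGroup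

/-- `P` is a C¹ solution on `[0,T]` of the scalar Riccati terminal value problem
with data `(A, B, R, q, H)`. -/
def IsRiccatiSol (A B R q H T : ℝ) (P : ℝ → ℝ) : Prop :=
  ContDiffOn ℝ 1 P (Set.Icc 0 T) ∧
  (∀ t ∈ Set.Icc 0 T,
    derivWithin P (Set.Icc 0 T) t + 2 * A * P t - B ^ 2 / R * P t ^ 2 + q = 0) ∧
  P T = H

/-- The coefficient matrix `𝒜₁` of the leader's Hamiltonian system, with weight
`w` (equal to `1 − Γ/N`, or `1` in the limit) and `p` the value `Π(t)` of the
corresponding scalar Riccati solution. -/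
noncomputable def matA1 (A₀ B₀ A B F G L Q₀ R₀ Γ₀ Γ₁ Q R w p : ℝ) : Matrix (Fin 3) (Fin 3) ℝ :=
  !![A₀, -(B₀ * R₀⁻¹ * (G - B * R⁻¹ * L)), 0;
     Q₀ * Γ₀, -A + B * R⁻¹ * B * p, 0;
     -(p * F) + w * Q * Γ₁, p * R₀⁻¹ * (G - B * R⁻¹ * L) ^ 2, -A + B * R⁻¹ * B * p]

/-- The coefficient matrix `ℬ₁` of the leader's Hamiltonian system. -/
noncomputable def matB1 (B₀ B L G Q₀ R₀ Γ₀ R p : ℝ) : Matrix (Fin 3) (Fin 3) ℝ :=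
  !![B₀ * R₀⁻¹ * B₀, 0, -(B₀ * R₀⁻¹ * p * (G - B * R⁻¹ * L));
     0, Q₀ * Γ₀ ^ 2, 0;
     -(B₀ * R₀⁻¹ * p * (G - B * R⁻¹ * L)), 0, p ^ 2 * R₀⁻¹ * (G - B * R⁻¹ * L) ^ 2]

/-- The coefficient matrix `ℬ₂` of the leader's Hamiltonian system. -/
noncomputable def matB2 (A₀ B₀ A B F G L Q₀ R₀ Γ₀ Γ₁ Q R w p : ℝ) : Matrix (Fin 3) (Fin 3) ℝ :=
  !![A₀, -(Q₀ * Γ₀), -(p * F) + w * Q * Γ₁;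
     B₀ * R₀⁻¹ * (G - B * R⁻¹ * L), -A + B * R⁻¹ * B * p, -(p * R₀⁻¹ * (G - B * R⁻¹ * L) ^ 2);
     0, 0, -A + B * R⁻¹ * B * p]

/-- The inhomogeneous vector `𝔣₀` of the leader's Hamiltonian system, regarded
as an element of Euclidean 3-space. -/
noncomputable def vecf0 (f₀ f Q₀ Γ₀ η₀ Q η w p : ℝ) : EuclideanSpace ℝ (Fin 3) :=
  (WithLp.equiv 2 (Fin 3 → ℝ)).symm ![f₀, -(Q₀ * Γ₀ * η₀), w * Q * η - p * f]

/-!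
Run backwards from `T`, a Riccati solution with `q ≥ 0` and `H ≥ 0` stays nonnegative, by a
barrier argument; the quadratic term then only pulls it down, so Grönwall bounds it uniformly
in `q ≤ q̂`. On that bounded band the Riccati vector field is Lipschitz, and Grönwall again gives
`|Π_N − Π̄| ≤ c |q_N − q̄| = O(1/N)`. All coefficients are affine in the weight `1 − Γ/N` and in
`Π` (in `Π` and `Π²` for `ℬ₁`), hence differ by `O(|Π_N − Π̄| + |Γ|/N) = O(1/N)`.
-/

open Set Real

theorem gronwallBound_δ0 (K ε x : ℝ) : gronwallBound 0 K ε x = ε * gronwallBound 0 K 1 x := by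
  unfold gronwallBound
  split_ifs <;> ring

theorem abs_one_sub_div_sub_one (Γ : ℝ) (N : ℕ) : |1 - Γ / N - 1| = |Γ| / N := by
  rw [sub_sub_cancel_left, abs_neg, abs_div, Nat.abs_cast]

theorem one_sub_div_mul_le {Γ q : ℝ} {N : ℕ} (hN : 0 < N) (hq : 0 ≤ q) :
    (1 - Γ / N) * q ≤ (1 + |Γ|) * q := by
  have hΓN : -(Γ / N) ≤ |Γ| := (neg_le_abs _).trans <| by
    rw [abs_div, Nat.abs_cast]; exact div_le_self (abs_nonneg Γ) (Nat.one_le_cast.2 hN)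
  gcongr
  linarith

theorem mapsTo_const_sub_Icc_zero {T : ℝ} : MapsTo (T - ·) (Icc 0 T) (Icc 0 T) :=
  fun _ hs => ⟨sub_nonneg.2 hs.2, sub_le_self T hs.1⟩

namespace IsRiccatiSol

variable {A B R q H T : ℝ} {P : ℝ → ℝ}

theorem hasDerivWithinAt (h : IsRiccatiSol A B R q H T P) {t : ℝ} (ht : t ∈ Icc 0 T) :
    HasDerivWithinAt P (-(2 * A * P t) + B ^ 2 / R * P t ^ 2 - q) (Icc 0 T) t := by
  have hP := (h.1.differentiableOn one_ne_zero t ht).hasDerivWithinAt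
  rwa [show derivWithin P (Icc 0 T) t = -(2 * A * P t) + B ^ 2 / R * P t ^ 2 - q by
    linarith [h.2.1 t ht]] at hP

theorem continuousOn_comp_sub (h : IsRiccatiSol A B R q H T P) :
    ContinuousOn (fun s => P (T - s)) (Icc 0 T) :=
  h.1.continuousOn.comp (continuousOn_const.sub continuousOn_id) mapsTo_const_sub_Icc_zero

theorem hasDerivWithinAt_comp_sub (h : IsRiccatiSol A B R q H T P) {s : ℝ} (hs : s ∈ Ico 0 T) :
    HasDerivWithinAt (fun s => P (T - s))
      (2 * A * P (T - s) - B ^ 2 / R * P (T - s) ^ 2 + q) (Ici s) s := by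
  have hP := (h.hasDerivWithinAt (mapsTo_const_sub_Icc_zero (Ico_subset_Icc_self hs))).comp s
    ((hasDerivAt_id s).const_sub T).hasDerivWithinAt mapsTo_const_sub_Icc_zero
  exact (hP.mono_of_mem_nhdsWithin (Icc_mem_nhdsGE_of_mem hs)).congr_deriv (by ring)

theorem nonneg (hR : 0 < R) (hq : 0 ≤ q) (hH : 0 ≤ H) (h : IsRiccatiSol A B R q H T P)
    {t : ℝ} (ht : t ∈ Icc 0 T) : 0 ≤ P t := by
  obtain ⟨S, hS⟩ := isCompact_Icc.exists_bound_of_continuousOn h.1.continuousOn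
  set K := 2 * |A| + B ^ 2 / R * S + 1
  -- `-P (T - s)` can first touch the barrier `ε e^{Ks}` only where `P < 0`, and there
  -- its growth rate is at most `(2|A| + B²S/R)(-P)`, strictly below the barrier's.
  have barrier : ∀ ε > 0, ∀ s ∈ Icc 0 T, -P (T - s) ≤ ε * exp (K * s) := by
    intro ε hε
    refine image_le_of_deriv_right_lt_deriv_boundary' h.continuousOn_comp_sub.neg
      (fun s hs => (h.hasDerivWithinAt_comp_sub hs).neg) ?_ (by fun_prop)
      (fun s _ => (((hasDerivAt_id s).const_mul K).exp.const_mul ε).hasDerivWithinAt) ?_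
    · simp only [Pi.neg_apply, sub_zero, h.2.2, mul_zero, exp_zero, mul_one]
      linarith
    · intro s hs hcontact
      simp only [Pi.neg_apply] at hcontact
      set u := P (T - s)
      have hu : 0 < -u := hcontact ▸ by positivity
      have hSu : |u| ≤ S := by
        simpa using hS _ (mapsTo_const_sub_Icc_zero (Ico_subset_Icc_self hs))
      have hA : -(2 * A * u) ≤ 2 * |A| * -u := by
        nlinarith [le_abs_self A, neg_abs_le A]
      have hquad : B ^ 2 / R * u ^ 2 ≤ B ^ 2 / R * S * -u := by
        rw [mul_assoc]
        gcongr
        nlinarith [abs_of_neg (neg_pos.1 hu)]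
      calc _ ≤ (2 * |A| + B ^ 2 / R * S) * -u := by linarith
        _ < K * -u := by linarith
        _ = _ := by rw [hcontact, id]; ring
  refine neg_nonpos.1 (le_of_forall_pos_le_add fun ε hε => ?_)
  simpa [div_mul_cancel₀ _ (exp_pos _).ne'] using
    barrier (ε / exp (K * (T - t))) (by positivity) (T - t) (mapsTo_const_sub_Icc_zero ht)

theorem abs_le_gronwallBound {q' : ℝ} (hR : 0 < R) (hq : 0 ≤ q) (hqq' : q ≤ q') (hH : 0 ≤ H)
    (h : IsRiccatiSol A B R q H T P) {t : ℝ} (ht : t ∈ Icc 0 T) :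
    |P t| ≤ gronwallBound H (2 * |A|) q' T := by
  have hgrowth : ∀ s ∈ Ico 0 T,
      2 * A * P (T - s) - B ^ 2 / R * P (T - s) ^ 2 + q ≤ 2 * |A| * P (T - s) + q' := by
    intro s hs
    have hP := h.nonneg hR hq hH (mapsTo_const_sub_Icc_zero (Ico_subset_Icc_self hs))
    have hA : A * P (T - s) ≤ |A| * P (T - s) := by gcongr; exact le_abs_self A
    have hquad : 0 ≤ B ^ 2 / R * P (T - s) ^ 2 := by positivity
    linarith
  have hT : T - t - 0 ≤ T := by linarith [ht.1]
  calc |P t| = P (T - (T - t)) := by rw [sub_sub_cancel, abs_of_nonneg (h.nonneg hR hq hH ht)]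
    _ ≤ gronwallBound H (2 * |A|) q' (T - t - 0) :=
      le_gronwallBound_of_liminf_deriv_right_le h.continuousOn_comp_sub
        (fun s hs _ hr => (h.hasDerivWithinAt_comp_sub hs).liminf_right_slope_le hr)
        (by simp [h.2.2]) hgrowth (T - t) (mapsTo_const_sub_Icc_zero ht)
    _ ≤ gronwallBound H (2 * |A|) q' T := gronwallBound_mono hH (hq.trans hqq') (by positivity) hT

theorem abs_sub_le {P' : ℝ → ℝ} {q' M : ℝ} (h : IsRiccatiSol A B R q H T P)
    (h' : IsRiccatiSol A B R q' H T P') (hP : ∀ t ∈ Icc 0 T, |P t| ≤ M)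
    (hP' : ∀ t ∈ Icc 0 T, |P' t| ≤ M) {t : ℝ} (ht : t ∈ Icc 0 T) :
    |P t - P' t| ≤ |q - q'| * gronwallBound 0 (2 * |A| + 2 * |B ^ 2 / R| * M) 1 T := by
  set K := 2 * |A| + 2 * |B ^ 2 / R| * M
  have hM : 0 ≤ M := (abs_nonneg _).trans (hP t ht)
  have hlip : ∀ s ∈ Ico 0 T,
      ‖(2 * A * P (T - s) - B ^ 2 / R * P (T - s) ^ 2 + q)
        - (2 * A * P' (T - s) - B ^ 2 / R * P' (T - s) ^ 2 + q')‖
        ≤ K * ‖P (T - s) - P' (T - s)‖ + |q - q'| := by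
    intro s hs
    have hs' := mapsTo_const_sub_Icc_zero (Ico_subset_Icc_self hs)
    set u := P (T - s)
    set v := P' (T - s)
    have hcoef : |2 * A - B ^ 2 / R * (u + v)| ≤ K := by
      have huv : |u + v| ≤ 2 * M := (abs_add_le u v).trans (by linarith [hP _ hs', hP' _ hs'])
      calc |2 * A - B ^ 2 / R * (u + v)| ≤ |2 * A| + |B ^ 2 / R| * |u + v| := by
            rw [← abs_mul]; exact abs_sub _ _
        _ ≤ K := by
            rw [abs_mul, abs_two]
            nlinarith [mul_le_mul_of_nonneg_left huv (abs_nonneg (B ^ 2 / R))]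
    calc ‖(2 * A * u - B ^ 2 / R * u ^ 2 + q) - (2 * A * v - B ^ 2 / R * v ^ 2 + q')‖
        = |(2 * A - B ^ 2 / R * (u + v)) * (u - v) + (q - q')| := by
          rw [Real.norm_eq_abs]; ring_nf
      _ ≤ |2 * A - B ^ 2 / R * (u + v)| * |u - v| + |q - q'| := by
          rw [← abs_mul]; exact abs_add_le _ _
      _ ≤ K * ‖u - v‖ + |q - q'| := by rw [Real.norm_eq_abs]; gcongr
  have hT : T - t - 0 ≤ T := by linarith [ht.1]
  calc |P t - P' t| = ‖P (T - (T - t)) - P' (T - (T - t))‖ := by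
        rw [sub_sub_cancel, Real.norm_eq_abs]
    _ ≤ gronwallBound 0 K |q - q'| (T - t - 0) :=
      norm_le_gronwallBound_of_norm_deriv_right_le
        (h.continuousOn_comp_sub.sub h'.continuousOn_comp_sub)
        (fun s hs => (h.hasDerivWithinAt_comp_sub hs).sub (h'.hasDerivWithinAt_comp_sub hs))
        (by simp [h.2.2, h'.2.2]) hlip (T - t) (mapsTo_const_sub_Icc_zero ht)
    _ ≤ gronwallBound 0 K |q - q'| T :=
      gronwallBound_mono le_rfl (abs_nonneg _) (by positivity) hT
    _ = |q - q'| * gronwallBound 0 K 1 T := gronwallBound_δ0 K _ T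

end IsRiccatiSol

theorem exists_norm_sub_le_of_sub_eq {α E : Type*} [SeminormedAddCommGroup E] [NormedSpace ℝ E]
    {Φ : α → E} {a b : α → ℝ} {u v : E}
    (hΦ : ∀ x y, Φ x - Φ y = (a x - a y) • u + (b x - b y) • v) :
    ∃ κ, 0 ≤ κ ∧ ∀ x y, ‖Φ x - Φ y‖ ≤ κ * (|a x - a y| + |b x - b y|) := by
  refine ⟨‖u‖ + ‖v‖, by positivity, fun x y => ?_⟩
  calc ‖Φ x - Φ y‖ ≤ |a x - a y| * ‖u‖ + |b x - b y| * ‖v‖ := by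
        simpa only [hΦ, norm_smul, Real.norm_eq_abs] using
          norm_add_le ((a x - a y) • u) ((b x - b y) • v)
    _ ≤ (‖u‖ + ‖v‖) * (|a x - a y| + |b x - b y|) := by
        nlinarith [norm_nonneg u, norm_nonneg v, abs_nonneg (a x - a y), abs_nonneg (b x - b y)]

section LeaderCoefficients

attribute [local instance] Matrix.frobeniusNormedSpace

theorem matA1_sub_matA1 (A₀ B₀ A B F G L Q₀ R₀ Γ₀ Γ₁ Q R w p w' p' : ℝ) :
    matA1 A₀ B₀ A B F G L Q₀ R₀ Γ₀ Γ₁ Q R w p - matA1 A₀ B₀ A B F G L Q₀ R₀ Γ₀ Γ₁ Q R w' p' =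
      (p - p') • !![0, 0, 0; 0, B * R⁻¹ * B, 0; -F, R₀⁻¹ * (G - B * R⁻¹ * L) ^ 2, B * R⁻¹ * B] +
      (w - w') • !![0, 0, 0; 0, 0, 0; Q * Γ₁, 0, 0] := by
  ext i j
  fin_cases i <;> fin_cases j <;> simp [matA1] <;> ring

theorem matB1_sub_matB1 (B₀ B L G Q₀ R₀ Γ₀ R p p' : ℝ) :
    matB1 B₀ B L G Q₀ R₀ Γ₀ R p - matB1 B₀ B L G Q₀ R₀ Γ₀ R p' =
      (p - p') • !![0, 0, -(B₀ * R₀⁻¹ * (G - B * R⁻¹ * L)); 0, 0, 0;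
        -(B₀ * R₀⁻¹ * (G - B * R⁻¹ * L)), 0, 0] +
      (p ^ 2 - p' ^ 2) • !![0, 0, 0; 0, 0, 0; 0, 0, R₀⁻¹ * (G - B * R⁻¹ * L) ^ 2] := by
  ext i j
  fin_cases i <;> fin_cases j <;> simp [matB1] <;> ring

theorem matB2_sub_matB2 (A₀ B₀ A B F G L Q₀ R₀ Γ₀ Γ₁ Q R w p w' p' : ℝ) :
    matB2 A₀ B₀ A B F G L Q₀ R₀ Γ₀ Γ₁ Q R w p - matB2 A₀ B₀ A B F G L Q₀ R₀ Γ₀ Γ₁ Q R w' p' =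
      (p - p') • !![0, 0, -F; 0, B * R⁻¹ * B, -(R₀⁻¹ * (G - B * R⁻¹ * L) ^ 2); 0, 0, B * R⁻¹ * B] +
      (w - w') • !![0, 0, Q * Γ₁; 0, 0, 0; 0, 0, 0] := by
  ext i j
  fin_cases i <;> fin_cases j <;> simp [matB2] <;> ring

theorem vecf0_sub_vecf0 (f₀ f Q₀ Γ₀ η₀ Q η w p w' p' : ℝ) :
    vecf0 f₀ f Q₀ Γ₀ η₀ Q η w p - vecf0 f₀ f Q₀ Γ₀ η₀ Q η w' p' =
      (p - p') • !₂[0, 0, -f] + (w - w') • !₂[0, 0, Q * η] := by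
  ext i
  fin_cases i <;> simp [vecf0]
  ring

theorem exists_leaderCoeffs_sub_le (A₀ B₀ A B F G L Q₀ R₀ Γ₀ Γ₁ Q R f₀ f η₀ η : ℝ) {M : ℝ}
    (hM : 0 ≤ M) :
    ∃ κ, 0 ≤ κ ∧ ∀ w w' p p' : ℝ, |p| ≤ M → |p'| ≤ M →
      ‖matA1 A₀ B₀ A B F G L Q₀ R₀ Γ₀ Γ₁ Q R w p - matA1 A₀ B₀ A B F G L Q₀ R₀ Γ₀ Γ₁ Q R w' p'‖
        + ‖matB1 B₀ B L G Q₀ R₀ Γ₀ R p - matB1 B₀ B L G Q₀ R₀ Γ₀ R p'‖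
        + ‖matB2 A₀ B₀ A B F G L Q₀ R₀ Γ₀ Γ₁ Q R w p - matB2 A₀ B₀ A B F G L Q₀ R₀ Γ₀ Γ₁ Q R w' p'‖
        + ‖vecf0 f₀ f Q₀ Γ₀ η₀ Q η w p - vecf0 f₀ f Q₀ Γ₀ η₀ Q η w' p'‖
        ≤ κ * (|p - p'| + |w - w'|) := by
  obtain ⟨κ₁, hκ₁, h₁⟩ := exists_norm_sub_le_of_sub_eq (E := Matrix (Fin 3) (Fin 3) ℝ)
    fun x y : ℝ × ℝ => matA1_sub_matA1 A₀ B₀ A B F G L Q₀ R₀ Γ₀ Γ₁ Q R x.1 x.2 y.1 y.2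
  obtain ⟨κ₂, hκ₂, h₂⟩ := exists_norm_sub_le_of_sub_eq (E := Matrix (Fin 3) (Fin 3) ℝ)
    (matB1_sub_matB1 B₀ B L G Q₀ R₀ Γ₀ R)
  obtain ⟨κ₃, hκ₃, h₃⟩ := exists_norm_sub_le_of_sub_eq (E := Matrix (Fin 3) (Fin 3) ℝ)
    fun x y : ℝ × ℝ => matB2_sub_matB2 A₀ B₀ A B F G L Q₀ R₀ Γ₀ Γ₁ Q R x.1 x.2 y.1 y.2
  obtain ⟨κ₄, hκ₄, h₄⟩ := exists_norm_sub_le_of_sub_eq fun x y : ℝ × ℝ =>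
    vecf0_sub_vecf0 f₀ f Q₀ Γ₀ η₀ Q η x.1 x.2 y.1 y.2
  refine ⟨κ₁ + κ₂ * (1 + 2 * M) + κ₃ + κ₄, by positivity, fun w w' p p' hp hp' => ?_⟩
  have hsq : |p ^ 2 - p' ^ 2| ≤ 2 * M * |p - p'| := by
    rw [sq_sub_sq, abs_mul]
    gcongr
    linarith [abs_add_le p p']
  have hB1 := (h₂ p p').trans (mul_le_mul_of_nonneg_left (add_le_add_right hsq _) hκ₂)
  have hB1' :
      κ₂ * (|p - p'| + 2 * M * |p - p'|) ≤ κ₂ * (1 + 2 * M) * (|p - p'| + |w - w'|) := by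
    nlinarith [abs_nonneg (w - w'), mul_nonneg hκ₂ (abs_nonneg (w - w'))]
  linarith [h₁ (w, p) (w', p'), h₃ (w, p) (w', p'), h₄ (w, p) (w', p')]

end LeaderCoefficients

theorem leader_coefficients_meanfield_convergence_general
    (T A₀ B₀ f₀ A B F G f L Q₀ R₀ Γ₀ Γ₁ η₀ Q R H Γ η : ℝ)
    (hT : 0 < T) (hR : 0 < R)
    (hH : 0 ≤ H) (hΓQ : 0 ≤ (1 - Γ) * Q)
    (Pibar : ℝ → ℝ) (hPibar : IsRiccatiSol A B R ((1 - Γ) * Q) H T Pibar) :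
    ∃ C : ℝ, 0 ≤ C ∧
      ∀ N : ℕ, 0 < N → 0 ≤ 1 - Γ / (N : ℝ) → 0 ≤ (1 - Γ / (N : ℝ)) * (1 - Γ) →
        ∀ PiN : ℝ → ℝ,
          IsRiccatiSol A B R ((1 - Γ / (N : ℝ)) * (1 - Γ) * Q) H T PiN →
          ∀ t ∈ Set.Icc 0 T,
            ‖matA1 A₀ B₀ A B F G L Q₀ R₀ Γ₀ Γ₁ Q R (1 - Γ / (N : ℝ)) (PiN t)
                - matA1 A₀ B₀ A B F G L Q₀ R₀ Γ₀ Γ₁ Q R 1 (Pibar t)‖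
              + ‖matB1 B₀ B L G Q₀ R₀ Γ₀ R (PiN t) - matB1 B₀ B L G Q₀ R₀ Γ₀ R (Pibar t)‖
              + ‖matB2 A₀ B₀ A B F G L Q₀ R₀ Γ₀ Γ₁ Q R (1 - Γ / (N : ℝ)) (PiN t)
                - matB2 A₀ B₀ A B F G L Q₀ R₀ Γ₀ Γ₁ Q R 1 (Pibar t)‖
              + ‖vecf0 f₀ f Q₀ Γ₀ η₀ Q η (1 - Γ / (N : ℝ)) (PiN t)
                - vecf0 f₀ f Q₀ Γ₀ η₀ Q η 1 (Pibar t)‖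
            ≤ C / (N : ℝ) := by
  set qbar := (1 - Γ) * Q
  set qmax := (1 + |Γ|) * qbar
  set M := gronwallBound H (2 * |A|) qmax T
  set D := gronwallBound 0 (2 * |A| + 2 * |B ^ 2 / R| * M) 1 T
  have hqbar : qbar ≤ qmax := le_mul_of_one_le_left hΓQ (by linarith [abs_nonneg Γ])
  have hPibar_le : ∀ s ∈ Icc 0 T, |Pibar s| ≤ M := fun s hs =>
    hPibar.abs_le_gronwallBound hR hΓQ hqbar hH hs
  have hM : 0 ≤ M := (abs_nonneg _).trans (hPibar_le T ⟨hT.le, le_rfl⟩)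
  have hD : 0 ≤ D :=
    gronwallBound_x0 0 _ 1 ▸ gronwallBound_mono le_rfl zero_le_one (by positivity) hT.le
  obtain ⟨κ, hκ, hcoeff⟩ :=
    exists_leaderCoeffs_sub_le A₀ B₀ A B F G L Q₀ R₀ Γ₀ Γ₁ Q R f₀ f η₀ η hM
  refine ⟨κ * |Γ| * (qbar * D + 1), by positivity, fun N hN hw _ PiN hPiN t ht => ?_⟩
  have hqN_sub : |(1 - Γ / N) * (1 - Γ) * Q - qbar| = |Γ| / N * qbar := by
    rw [mul_assoc, ← sub_one_mul, abs_mul, abs_one_sub_div_sub_one, abs_of_nonneg hΓQ]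
  have hqN : 0 ≤ (1 - Γ / N) * (1 - Γ) * Q := by rw [mul_assoc]; exact mul_nonneg hw hΓQ
  have hqN_le : (1 - Γ / N) * (1 - Γ) * Q ≤ qmax := by
    rw [mul_assoc]; exact one_sub_div_mul_le hN hΓQ
  have hPiN_le : ∀ s ∈ Icc 0 T, |PiN s| ≤ M := fun s hs =>
    hPiN.abs_le_gronwallBound hR hqN hqN_le hH hs
  have hdiff := hPiN.abs_sub_le hPibar hPiN_le hPibar_le ht
  rw [hqN_sub] at hdiff
  calc _ ≤ κ * (|PiN t - Pibar t| + |1 - Γ / N - 1|) :=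
        hcoeff _ _ _ _ (hPiN_le t ht) (hPibar_le t ht)
    _ ≤ κ * (|Γ| / N * qbar * D + |Γ| / N) := by rw [abs_one_sub_div_sub_one]; gcongr
    _ = κ * |Γ| * (qbar * D + 1) / N := by ring

/-- There is a constant `C ≥ 0`, independent of `N`, such that for every `N` with
`1 − Γ/N ≥ 0` and `(1 − Γ/N)(1 − Γ) ≥ 0`, the coefficient matrices of the
`N`-player and limiting leader Hamiltonian systems satisfy
`sup_{t∈[0,T]} (‖𝒜̌₁ − 𝒜₁‖ + ‖ℬ̌₁ − ℬ₁‖ + ‖ℬ̌₂ − ℬ₂‖ + ‖𝔣̌₀ − 𝔣₀‖) ≤ C/N`,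
with the Frobenius norm on matrices and the Euclidean norm on vectors. -/
theorem leader_coefficients_meanfield_convergence
    (T A₀ B₀ C₀ f₀ A B F G f L Q₀ R₀ Γ₀ Γ₁ η₀ Q R H Γ η : ℝ)
    (hT : 0 < T) (hR : 0 < R) (hR₀ : 0 < R₀) (hQ : 0 ≤ Q) (hQ₀ : 0 ≤ Q₀)
    (hH : 0 ≤ H) (hΓQ : 0 ≤ (1 - Γ) * Q)
    (Pibar : ℝ → ℝ) (hPibar : IsRiccatiSol A B R ((1 - Γ) * Q) H T Pibar) :
    ∃ C : ℝ, 0 ≤ C ∧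
      ∀ N : ℕ, 0 < N → 0 ≤ 1 - Γ / (N : ℝ) → 0 ≤ (1 - Γ / (N : ℝ)) * (1 - Γ) →
        ∀ PiN : ℝ → ℝ,
          IsRiccatiSol A B R ((1 - Γ / (N : ℝ)) * (1 - Γ) * Q) H T PiN →
          ∀ t ∈ Set.Icc 0 T,
            ‖matA1 A₀ B₀ A B F G L Q₀ R₀ Γ₀ Γ₁ Q R (1 - Γ / (N : ℝ)) (PiN t)
                - matA1 A₀ B₀ A B F G L Q₀ R₀ Γ₀ Γ₁ Q R 1 (Pibar t)‖
              + ‖matB1 B₀ B L G Q₀ R₀ Γ₀ R (PiN t) - matB1 B₀ B L G Q₀ R₀ Γ₀ R (Pibar t)‖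
              + ‖matB2 A₀ B₀ A B F G L Q₀ R₀ Γ₀ Γ₁ Q R (1 - Γ / (N : ℝ)) (PiN t)
                - matB2 A₀ B₀ A B F G L Q₀ R₀ Γ₀ Γ₁ Q R 1 (Pibar t)‖
              + ‖vecf0 f₀ f Q₀ Γ₀ η₀ Q η (1 - Γ / (N : ℝ)) (PiN t)
                - vecf0 f₀ f Q₀ Γ₀ η₀ Q η 1 (Pibar t)‖
            ≤ C / (N : ℝ) :=
  leader_coefficients_meanfield_convergence_general T A₀ B₀ f₀ A B F G f L Q₀ R₀ Γ₀ Γ₁ η₀ Q R H Γ η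
    hT hR hH hΓQ Pibar hPibar
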